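/- arXiv:2204.08420 — 6 statements merged into one kernel-verified Lean document; each statement's English description precedes it below -/
import Mathlib

section
/- Let q ∈ (0,1) and ζ > 0. Let χ be a q-geometric random variable with parameter q, i.e. P(χ = k) = q^k (q;q)_∞ / (q;q)_k for k ∈ ℤ_{≥0}, and let S be an independent theta-distributed random variable, i.e. P(S = k) = q^{k²/2} ζ^k / ϑ₃(ζ;q) for k ∈ ℤ. Then for every n ∈ ℤ, P(χ + S ≤ n) = 1/(-ζ q^{1/2+n}; q)_∞. -/
/-!
Let `F(n) = Σ_k q^{k²/2} ζ^k P(χ ≤ n - k) = ϑ₃(ζ;q) P(χ + S ≤ n)`, where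
`P(χ ≤ m) = (q;q)_∞ / (q;q)_m` by a telescoping finite sum. Since
`P(χ ≤ m - 1) = (1 - q^m) P(χ ≤ m)` and `q^{k²/2} ζ^k q^{n-k} = ζ q^{n-1/2} q^{(k-1)²/2} ζ^{k-1}`,
shifting the summation index gives `F(n) = (1 + ζ q^{n-1/2}) F(n-1)`, while splitting off the first
factor gives `G(n-1) = (1 + ζ q^{n-1/2}) G(n)` for `G(n) = (-ζ q^{1/2+n}; q)_∞`. So `G(n) F(n)` does
not depend on `n`, and letting `n → ∞` (where `G(n) → 1` and, by dominated convergence,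
`F(n) → ϑ₃(ζ;q)`) gives `G(n) F(n) = ϑ₃(ζ;q)`.
-/

open MeasureTheory

noncomputable section

/-- finite q-Pochhammer symbol `(z;q)_n = ∏_{i=0}^{n-1} (1 - z qⁱ)` -/
def qPochFin (z q : ℝ) (n : ℕ) : ℝ := ∏ i ∈ Finset.range n, (1 - z * q ^ i)

/-- infinite q-Pochhammer symbol `(z;q)_∞ = ∏_{i≥0} (1 - z qⁱ)` -/
def qPochInf (z q : ℝ) : ℝ := ∏' i : ℕ, (1 - z * q ^ i)

/-- Jacobi theta function `ϑ₃(ζ;q) = Σ_{k∈ℤ} q^{k²/2} ζ^k` -/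
def theta3 (ζ q : ℝ) : ℝ := ∑' k : ℤ, q ^ (((k : ℝ) ^ 2) / 2) * ζ ^ k

open Filter Topology ProbabilityTheory

lemma eq_of_forall_sub_one_eq_of_tendsto {α : Type*} [TopologicalSpace α] [T2Space α]
    {u : ℤ → α} {a : α} (hu : ∀ n, u (n - 1) = u n) (h : Tendsto u atTop (𝓝 a)) (n : ℤ) :
    u n = a := by
  have hconst : ∀ m, u n = u m := fun m =>
    Int.inductionOn' m n rfl (fun k _ ih => by rw [ih, ← hu (k + 1), add_sub_cancel_right])
      (fun k _ ih => by rw [ih, hu])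
  exact tendsto_nhds_unique (tendsto_const_nhds.congr hconst) h

section QPochhammer

variable {z q : ℝ}

lemma qPochFin_succ (z q : ℝ) (m : ℕ) :
    qPochFin z q (m + 1) = qPochFin z q m * (1 - z * q ^ m) :=
  Finset.prod_range_succ _ m

lemma multipliable_one_sub_mul_pow (z : ℝ) (hq : |q| < 1) :
    Multipliable fun i : ℕ => 1 - z * q ^ i := by
  simpa only [sub_eq_add_neg] using
    Real.multipliable_one_add_of_summable ((summable_geometric_of_abs_lt_one hq).mul_left z).neg

lemma tendsto_qPochFin (z : ℝ) (hq : |q| < 1) :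
    Tendsto (qPochFin z q) atTop (𝓝 (qPochInf z q)) :=
  (multipliable_one_sub_mul_pow z hq).hasProd.tendsto_prod_nat

lemma qPochInf_eq_qPochFin_mul (z : ℝ) (hq : |q| < 1) (m : ℕ) :
    qPochInf z q = qPochFin z q m * qPochInf (z * q ^ m) q := by
  have hshift : (fun i : ℕ => 1 - z * q ^ (i + m)) = fun i => 1 - z * q ^ m * q ^ i := by
    ext i; ring
  have h := Multipliable.prod_mul_tprod_nat_mul' (f := fun i : ℕ => 1 - z * q ^ i) (k := m)
    (hshift ▸ multipliable_one_sub_mul_pow (z * q ^ m) hq)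
  rw [hshift] at h
  exact h.symm

lemma qPochInf_eq_one_sub_mul (z : ℝ) (hq : |q| < 1) :
    qPochInf z q = (1 - z) * qPochInf (z * q) q := by
  simpa [qPochFin] using qPochInf_eq_qPochFin_mul z hq 1

lemma one_sub_mul_pow_pos (hq0 : 0 ≤ q) (hq1 : q ≤ 1) (hz : z < 1) (i : ℕ) :
    0 < 1 - z * q ^ i := by
  have hqi := pow_le_one₀ hq0 hq1 (n := i)
  rcases le_or_gt z 0 with h | h <;> nlinarith [pow_nonneg hq0 i]

lemma qPochFin_pos (hq0 : 0 ≤ q) (hq1 : q ≤ 1) (hz : z < 1) (m : ℕ) : 0 < qPochFin z q m :=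
  Finset.prod_pos fun i _ => one_sub_mul_pow_pos hq0 hq1 hz i

lemma qPochInf_pos (hq0 : 0 ≤ q) (hq1 : q < 1) (hz : z < 1) : 0 < qPochInf z q := by
  have hlog : Summable fun i : ℕ => Real.log (1 - z * q ^ i) := by
    simpa only [sub_eq_add_neg] using Real.summable_log_one_add_of_summable
      ((summable_geometric_of_lt_one hq0 hq1).mul_left z).neg
  rw [qPochInf, ← Real.rexp_tsum_eq_tprod (one_sub_mul_pow_pos hq0 hq1.le hz) hlog]
  exact Real.exp_pos _

lemma qPochFin_antitone (hq0 : 0 ≤ q) (hq1 : q ≤ 1) (hz0 : 0 ≤ z) (hz1 : z < 1) :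
    Antitone (qPochFin z q) :=
  antitone_nat_of_succ_le fun m => by
    rw [qPochFin_succ]
    exact mul_le_of_le_one_right (qPochFin_pos hq0 hq1 hz1 m).le
      (by nlinarith [pow_nonneg hq0 m])

lemma qPochInf_le_qPochFin (hq0 : 0 ≤ q) (hq1 : q < 1) (hz0 : 0 ≤ z) (hz1 : z < 1) (m : ℕ) :
    qPochInf z q ≤ qPochFin z q m :=
  (qPochFin_antitone hq0 hq1.le hz0 hz1).le_of_tendsto
    (tendsto_qPochFin z (abs_lt.2 ⟨by linarith, hq1⟩)) m

lemma one_le_qPochInf (hq0 : 0 ≤ q) (hq1 : q < 1) (hz : z ≤ 0) : 1 ≤ qPochInf z q :=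
  ge_of_tendsto' (tendsto_qPochFin z (abs_lt.2 ⟨by linarith, hq1⟩)) fun m =>
    Finset.one_le_prod fun i _ => by nlinarith [pow_nonneg hq0 i]

lemma qPochInf_le_exp (hq0 : 0 ≤ q) (hq1 : q < 1) (hz : z ≤ 0) :
    qPochInf z q ≤ Real.exp (-z / (1 - q)) := by
  have hgeom := (summable_geometric_of_lt_one hq0 hq1).mul_left (-z)
  refine le_of_tendsto' (tendsto_qPochFin z (abs_lt.2 ⟨by linarith, hq1⟩)) fun m => ?_
  calc qPochFin z q m = ∏ i ∈ Finset.range m, (1 + -z * q ^ i) := by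
        simp only [qPochFin, neg_mul, ← sub_eq_add_neg]
    _ ≤ Real.exp (∑ i ∈ Finset.range m, -z * q ^ i) :=
        Real.prod_one_add_le_exp_sum _ fun i => mul_nonneg (neg_nonneg.2 hz) (pow_nonneg hq0 i)
    _ ≤ Real.exp (-z / (1 - q)) := by
        rw [Real.exp_le_exp, div_eq_mul_inv, ← tsum_geometric_of_lt_one hq0 hq1, ← tsum_mul_left]
        exact hgeom.sum_le_tsum _ fun i _ => mul_nonneg (neg_nonneg.2 hz) (pow_nonneg hq0 i)

lemma tendsto_qPochInf_nhdsLE_zero (hq0 : 0 ≤ q) (hq1 : q < 1) :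
    Tendsto (fun z => qPochInf z q) (𝓝[≤] 0) (𝓝 1) := by
  have hexp : Tendsto (fun z => Real.exp (-z / (1 - q))) (𝓝[≤] 0) (𝓝 1) := by
    have h : Continuous fun z => Real.exp (-z / (1 - q)) := by fun_prop
    simpa using (h.tendsto 0).mono_left nhdsWithin_le_nhds
  refine tendsto_of_tendsto_of_tendsto_of_le_of_le' tendsto_const_nhds hexp ?_ ?_ <;>
    filter_upwards [self_mem_nhdsWithin] with z hz
  exacts [one_le_qPochInf hq0 hq1 hz, qPochInf_le_exp hq0 hq1 hz]

end QPochhammer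

section QGeometric

variable {q : ℝ}

def qGeomCDF (q : ℝ) (m : ℤ) : ℝ :=
  if 0 ≤ m then qPochInf q q / qPochFin q q m.toNat else 0

lemma sum_range_pow_div_qPochFin (hq0 : 0 ≤ q) (hq1 : q < 1) (m : ℕ) :
    ∑ j ∈ Finset.range (m + 1), q ^ j / qPochFin q q j = 1 / qPochFin q q m := by
  induction m with
  | zero => simp [qPochFin]
  | succ m ih =>
    have hfin := (qPochFin_pos hq0 hq1.le hq1 m).ne'
    have hfac : 1 - q * q ^ m ≠ 0 := (one_sub_mul_pow_pos hq0 hq1.le hq1 m).ne'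
    rw [Finset.sum_range_succ, ih, qPochFin_succ]
    field_simp
    ring

lemma qGeomCDF_nonneg (hq0 : 0 ≤ q) (hq1 : q < 1) (m : ℤ) : 0 ≤ qGeomCDF q m := by
  unfold qGeomCDF
  split_ifs
  · exact div_nonneg (qPochInf_pos hq0 hq1 hq1).le (qPochFin_pos hq0 hq1.le hq1 _).le
  · exact le_rfl

lemma qGeomCDF_le_one (hq0 : 0 ≤ q) (hq1 : q < 1) (m : ℤ) : qGeomCDF q m ≤ 1 := by
  unfold qGeomCDF
  split_ifs
  · exact div_le_one_of_le₀ (qPochInf_le_qPochFin hq0 hq1 hq0 hq1 _)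
      (qPochFin_pos hq0 hq1.le hq1 _).le
  · exact zero_le_one

lemma qGeomCDF_sub_one (hq0 : 0 ≤ q) (hq1 : q < 1) (m : ℤ) :
    qGeomCDF q (m - 1) = (1 - q ^ m) * qGeomCDF q m := by
  rcases lt_trichotomy m 0 with hm | rfl | hm
  · rw [qGeomCDF, qGeomCDF, if_neg (by omega), if_neg (by omega), mul_zero]
  · simp [qGeomCDF]
  · obtain ⟨j, rfl⟩ : ∃ j : ℕ, m = ((j + 1 : ℕ) : ℤ) := ⟨(m - 1).toNat, by omega⟩
    have hfin := (qPochFin_pos hq0 hq1.le hq1 j).ne'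
    have hfac : 1 - q * q ^ j ≠ 0 := (one_sub_mul_pow_pos hq0 hq1.le hq1 j).ne'
    rw [qGeomCDF, qGeomCDF, if_pos (by omega), if_pos (by omega), zpow_natCast,
      show ((j + 1 : ℕ) : ℤ) - 1 = j by push_cast; ring, Int.toNat_natCast, Int.toNat_natCast,
      qPochFin_succ, pow_succ']
    field_simp

lemma tendsto_qGeomCDF (hq0 : 0 ≤ q) (hq1 : q < 1) :
    Tendsto (qGeomCDF q) atTop (𝓝 1) := by
  have hpos := (qPochInf_pos hq0 hq1 hq1).ne'
  have htoNat : Tendsto Int.toNat atTop atTop :=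
    tendsto_atTop_atTop.2 fun b => ⟨b, fun m hm => by omega⟩
  have h := (tendsto_const_nhds (x := qPochInf q q)).div
    ((tendsto_qPochFin q (abs_lt.2 ⟨by linarith, hq1⟩)).comp htoNat) hpos
  rw [div_self hpos] at h
  refine h.congr' ?_
  filter_upwards [eventually_ge_atTop 0] with m hm
  rw [qGeomCDF, if_pos hm]
  rfl

end QGeometric

section Probability

variable {Ω : Type*} [MeasurableSpace Ω] {μ : Measure Ω}

lemma measure_add_le_eq_tsum_mul {X Y : Ω → ℤ} (hX : Measurable X) (hY : Measurable Y)
    (hXY : IndepFun X Y μ) (n : ℤ) :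
    μ {ω | X ω + Y ω ≤ n} = ∑' k : ℤ, μ {ω | X ω ≤ n - k} * μ {ω | Y ω = k} := by
  have hset : {ω | X ω + Y ω ≤ n} = ⋃ k : ℤ, X ⁻¹' Set.Iic (n - k) ∩ Y ⁻¹' {k} := by
    ext ω
    simp only [Set.mem_ofPred_eq, Set.mem_iUnion, Set.mem_inter_iff, Set.mem_preimage,
      Set.mem_Iic, Set.mem_singleton_iff]
    exact ⟨fun h => ⟨Y ω, by omega, rfl⟩, fun ⟨k, h, hk⟩ => by omega⟩
  rw [hset, measure_iUnion]
  · exact tsum_congr fun k =>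
      hXY.measure_inter_preimage_eq_mul _ _ measurableSet_Iic (measurableSet_singleton k)
  · intro i j hij
    exact ((Set.disjoint_singleton.2 hij).preimage Y).mono Set.inter_subset_right
      Set.inter_subset_right
  · exact fun k => (hX measurableSet_Iic).inter (hY (measurableSet_singleton k))

lemma measure_natCast_le_eq_ofReal_qGeomCDF {q : ℝ} (hq0 : 0 ≤ q) (hq1 : q < 1) {χ : Ω → ℕ}
    (hχ : Measurable χ) (hχdist : ∀ k : ℕ, μ {ω | χ ω = k} =
      ENNReal.ofReal (q ^ k * qPochInf q q / qPochFin q q k)) (m : ℤ) :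
    μ {ω | (χ ω : ℤ) ≤ m} = ENNReal.ofReal (qGeomCDF q m) := by
  rcases lt_or_ge m 0 with hm | hm
  · have hempty : {ω | (χ ω : ℤ) ≤ m} = ∅ := by
      ext ω
      simp only [Set.mem_ofPred_eq, Set.mem_empty_iff_false, iff_false, not_le]
      omega
    simp [hempty, qGeomCDF, hm.not_ge]
  · obtain ⟨j, rfl⟩ := Int.eq_ofNat_of_zero_le hm
    have hset : {ω | (χ ω : ℤ) ≤ j} = χ ⁻¹' ↑(Finset.range (j + 1)) := by
      ext ω
      simp only [Set.mem_ofPred_eq, Finset.coe_range, Set.mem_preimage, Set.mem_Iio]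
      omega
    have hP := (qPochInf_pos hq0 hq1 hq1).le
    rw [hset, ← sum_measure_preimage_singleton _ fun k _ => hχ (measurableSet_singleton k)]
    simp only [Set.preimage, Set.mem_singleton_iff, hχdist]
    rw [← ENNReal.ofReal_sum_of_nonneg fun k _ => div_nonneg (mul_nonneg (pow_nonneg hq0 k) hP)
      (qPochFin_pos hq0 hq1.le hq1 k).le, qGeomCDF, if_pos hm, Int.toNat_natCast,
      div_eq_mul_one_div (qPochInf q q), ← sum_range_pow_div_qPochFin hq0 hq1, Finset.mul_sum]
    congr 1
    exact Finset.sum_congr rfl fun k _ => by ring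

end Probability

section Theta

variable {ζ q : ℝ}

def thetaWeight (ζ q : ℝ) (k : ℤ) : ℝ := q ^ ((k : ℝ) ^ 2 / 2) * ζ ^ k

lemma theta3_eq_tsum_thetaWeight (ζ q : ℝ) : theta3 ζ q = ∑' k, thetaWeight ζ q k := rfl

lemma summable_rpow_sq_div_two_mul_pow (hq0 : 0 < q) (hq1 : q < 1) (c : ℝ) :
    Summable fun k : ℕ => q ^ ((k : ℝ) ^ 2 / 2) * c ^ k := by
  have hlim : Tendsto (fun k : ℕ => q ^ ((k : ℝ) / 2) * c) atTop (𝓝 0) := by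
    have := (tendsto_rpow_atTop_of_base_lt_one q (by linarith) hq1).comp
      ((tendsto_natCast_atTop_atTop (R := ℝ)).atTop_div_const two_pos)
    simpa using this.mul_const c
  refine summable_geometric_two.of_norm_bounded_eventually_nat ?_
  filter_upwards [hlim.norm.eventually_le_const (by norm_num : ‖(0 : ℝ)‖ < 1 / 2)] with k hk
  have hsq : q ^ ((k : ℝ) ^ 2 / 2) * c ^ k = (q ^ ((k : ℝ) / 2) * c) ^ k := by
    rw [mul_pow, ← Real.rpow_natCast (q ^ ((k : ℝ) / 2)) k, ← Real.rpow_mul hq0.le]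
    ring_nf
  rw [hsq, norm_pow]
  exact pow_le_pow_left₀ (norm_nonneg _) hk k

lemma summable_thetaWeight (hq0 : 0 < q) (hq1 : q < 1) (ζ : ℝ) : Summable (thetaWeight ζ q) := by
  refine Summable.of_nat_of_neg ?_ ?_
  · simpa [thetaWeight] using summable_rpow_sq_div_two_mul_pow hq0 hq1 ζ
  · simpa [thetaWeight, zpow_neg, inv_pow] using summable_rpow_sq_div_two_mul_pow hq0 hq1 ζ⁻¹

lemma thetaWeight_pos (hq0 : 0 < q) (hζ : 0 < ζ) (k : ℤ) : 0 < thetaWeight ζ q k :=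
  mul_pos (Real.rpow_pos_of_pos hq0 _) (zpow_pos hζ k)

lemma theta3_pos (hq0 : 0 < q) (hq1 : q < 1) (hζ : 0 < ζ) : 0 < theta3 ζ q :=
  (summable_thetaWeight hq0 hq1 ζ).tsum_pos (fun k => (thetaWeight_pos hq0 hζ k).le) 0
    (thetaWeight_pos hq0 hζ 0)

lemma thetaWeight_mul_zpow (hq0 : 0 < q) (hζ : ζ ≠ 0) (n k : ℤ) :
    thetaWeight ζ q k * q ^ (n - k) = ζ * q ^ ((n : ℝ) - 1 / 2) * thetaWeight ζ q (k - 1) := by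
  have hexp : (k : ℝ) ^ 2 / 2 + ((n - k : ℤ) : ℝ) =
      ((n : ℝ) - 1 / 2) + ((k - 1 : ℤ) : ℝ) ^ 2 / 2 := by
    push_cast; ring
  rw [thetaWeight, thetaWeight, ← Real.rpow_intCast q (n - k)]
  calc q ^ ((k : ℝ) ^ 2 / 2) * ζ ^ k * q ^ ((n - k : ℤ) : ℝ)
      = q ^ ((k : ℝ) ^ 2 / 2 + ((n - k : ℤ) : ℝ)) * ζ ^ k := by rw [Real.rpow_add hq0]; ring
    _ = q ^ (((n : ℝ) - 1 / 2) + ((k - 1 : ℤ) : ℝ) ^ 2 / 2) * (ζ * ζ ^ (k - 1)) := by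
        rw [hexp, ← zpow_one_add₀ hζ, add_sub_cancel]
    _ = _ := by rw [Real.rpow_add hq0]; ring

/-- `F(n) = ϑ₃(ζ;q) · P(χ + S ≤ n)`. -/
def thetaConvCDF (ζ q : ℝ) (n : ℤ) : ℝ := ∑' k : ℤ, thetaWeight ζ q k * qGeomCDF q (n - k)

lemma summable_thetaWeight_mul_qGeomCDF (hq0 : 0 < q) (hq1 : q < 1) (hζ : 0 < ζ) (n : ℤ) :
    Summable fun k => thetaWeight ζ q k * qGeomCDF q (n - k) :=
  (summable_thetaWeight hq0 hq1 ζ).of_nonneg_of_le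
    (fun k => mul_nonneg (thetaWeight_pos hq0 hζ k).le (qGeomCDF_nonneg hq0.le hq1 _))
    (fun k => mul_le_of_le_one_right (thetaWeight_pos hq0 hζ k).le (qGeomCDF_le_one hq0.le hq1 _))

lemma thetaConvCDF_eq_mul_sub_one (hq0 : 0 < q) (hq1 : q < 1) (hζ : 0 < ζ) (n : ℤ) :
    thetaConvCDF ζ q n = (1 + ζ * q ^ ((n : ℝ) - 1 / 2)) * thetaConvCDF ζ q (n - 1) := by
  set c := ζ * q ^ ((n : ℝ) - 1 / 2)
  have hprev : HasSum (fun k => thetaWeight ζ q k * qGeomCDF q (n - 1 - k))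
      (thetaConvCDF ζ q (n - 1)) :=
    (summable_thetaWeight_mul_qGeomCDF hq0 hq1 hζ (n - 1)).hasSum
  have hshift : HasSum (fun k => thetaWeight ζ q (k - 1) * qGeomCDF q (n - k))
      (thetaConvCDF ζ q (n - 1)) := by
    refine ((Equiv.subRight (1 : ℤ)).hasSum_iff.2 hprev).congr_fun fun k => ?_
    simp only [Function.comp_apply, Equiv.subRight_apply, sub_sub_sub_cancel_right]
  have hterm : ∀ k, thetaWeight ζ q k * qGeomCDF q (n - k) = thetaWeight ζ q k *
      qGeomCDF q (n - 1 - k) + c * (thetaWeight ζ q (k - 1) * qGeomCDF q (n - k)) := fun k => by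
    rw [sub_right_comm, qGeomCDF_sub_one hq0.le hq1, ← mul_assoc c,
      ← thetaWeight_mul_zpow hq0 hζ.ne']
    ring
  rw [thetaConvCDF, tsum_congr hterm, (hprev.add (hshift.mul_left c)).tsum_eq]
  ring

lemma tendsto_thetaConvCDF (hq0 : 0 < q) (hq1 : q < 1) (hζ : 0 < ζ) :
    Tendsto (thetaConvCDF ζ q) atTop (𝓝 (theta3 ζ q)) := by
  rw [theta3_eq_tsum_thetaWeight]
  refine tendsto_tsum_of_dominated_convergence (summable_thetaWeight hq0 hq1 ζ) (fun k => ?_)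
    (Eventually.of_forall fun n k => ?_)
  · have hsub : Tendsto (fun n : ℤ => n - k) atTop atTop :=
      tendsto_atTop_atTop.2 fun b => ⟨b + k, fun n hn => by omega⟩
    simpa using ((tendsto_qGeomCDF hq0.le hq1).comp hsub).const_mul (thetaWeight ζ q k)
  · rw [Real.norm_of_nonneg (mul_nonneg (thetaWeight_pos hq0 hζ k).le
      (qGeomCDF_nonneg hq0.le hq1 _))]
    exact mul_le_of_le_one_right (thetaWeight_pos hq0 hζ k).le (qGeomCDF_le_one hq0.le hq1 _)

lemma tendsto_qPochInf_neg_mul_rpow (hq0 : 0 < q) (hq1 : q < 1) (hζ : 0 < ζ) :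
    Tendsto (fun n : ℤ => qPochInf (-ζ * q ^ ((1 : ℝ) / 2 + n)) q) atTop (𝓝 1) := by
  have hexp : Tendsto (fun n : ℤ => (1 : ℝ) / 2 + n) atTop atTop :=
    tendsto_atTop_add_const_left _ _ tendsto_intCast_atTop_atTop
  have hzero : Tendsto (fun n : ℤ => -ζ * q ^ ((1 : ℝ) / 2 + n)) atTop (𝓝 0) := by
    simpa using ((tendsto_rpow_atTop_of_base_lt_one q (by linarith) hq1).comp hexp).const_mul (-ζ)
  refine (tendsto_qPochInf_nhdsLE_zero hq0.le hq1).comp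
    (tendsto_nhdsWithin_iff.2 ⟨hzero, Eventually.of_forall fun n => ?_⟩)
  have := Real.rpow_pos_of_pos hq0 ((1 : ℝ) / 2 + n)
  exact mul_nonpos_of_nonpos_of_nonneg (neg_nonpos.2 hζ.le) this.le

lemma qPochInf_mul_thetaConvCDF (hq0 : 0 < q) (hq1 : q < 1) (hζ : 0 < ζ) (n : ℤ) :
    qPochInf (-ζ * q ^ ((1 : ℝ) / 2 + n)) q * thetaConvCDF ζ q n = theta3 ζ q := by
  have hlim := (tendsto_qPochInf_neg_mul_rpow hq0 hq1 hζ).mul (tendsto_thetaConvCDF hq0 hq1 hζ)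
  rw [one_mul] at hlim
  refine eq_of_forall_sub_one_eq_of_tendsto (fun n => ?_) hlim n
  have hz : -ζ * q ^ ((n : ℝ) - 1 / 2) * q = -ζ * q ^ ((1 : ℝ) / 2 + n) := by
    rw [mul_assoc, ← Real.rpow_add_one hq0.ne']
    ring_nf
  rw [show (1 : ℝ) / 2 + ((n - 1 : ℤ) : ℝ) = (n : ℝ) - 1 / 2 by push_cast; ring,
    qPochInf_eq_one_sub_mul _ (abs_lt.2 ⟨by linarith, hq1⟩), hz,
    thetaConvCDF_eq_mul_sub_one hq0 hq1 hζ n]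
  ring

end Theta

theorem stmt0_general {Ω : Type*} [MeasurableSpace Ω] (μ : Measure Ω)
    (q ζ : ℝ) (hq : q ∈ Set.Ioo (0:ℝ) 1) (hζ : 0 < ζ)
    (χ : Ω → ℕ) (S : Ω → ℤ) (hχ : Measurable χ) (hS : Measurable S)
    (hindep : ProbabilityTheory.IndepFun χ S μ)
    (hχdist : ∀ k : ℕ, μ {ω | χ ω = k} =
      ENNReal.ofReal (q ^ k * qPochInf q q / qPochFin q q k))
    (hSdist : ∀ k : ℤ, μ {ω | S ω = k} =
      ENNReal.ofReal (q ^ (((k : ℝ) ^ 2) / 2) * ζ ^ k / theta3 ζ q))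
    (n : ℤ) :
    μ {ω | (χ ω : ℤ) + S ω ≤ n} =
      ENNReal.ofReal (1 / qPochInf (-ζ * q ^ ((1 : ℝ) / 2 + (n : ℝ))) q) := by
  obtain ⟨hq0, hq1⟩ := hq
  have hθ := theta3_pos hq0 hq1 hζ
  have hG := one_le_qPochInf hq0.le hq1 (z := -ζ * q ^ ((1 : ℝ) / 2 + n))
    (mul_nonpos_of_nonpos_of_nonneg (neg_nonpos.2 hζ.le) (Real.rpow_nonneg hq0.le _))
  have hterm : ∀ k : ℤ, μ {ω | (χ ω : ℤ) ≤ n - k} * μ {ω | S ω = k} =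
      ENNReal.ofReal (thetaWeight ζ q k * qGeomCDF q (n - k) / theta3 ζ q) := fun k => by
    rw [measure_natCast_le_eq_ofReal_qGeomCDF hq0.le hq1 hχ hχdist, hSdist,
      ← ENNReal.ofReal_mul (qGeomCDF_nonneg hq0.le hq1 _), thetaWeight]
    ring_nf
  rw [measure_add_le_eq_tsum_mul (X := fun ω => (χ ω : ℤ)) (measurable_from_nat.comp hχ) hS
      (hindep.comp measurable_from_nat measurable_id) n, tsum_congr hterm,
    ← ENNReal.ofReal_tsum_of_nonneg
      (fun k => div_nonneg (mul_nonneg (thetaWeight_pos hq0 hζ k).le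
        (qGeomCDF_nonneg hq0.le hq1 _)) hθ.le)
      ((summable_thetaWeight_mul_qGeomCDF hq0 hq1 hζ n).div_const _),
    tsum_div_const, ← thetaConvCDF]
  congr 1
  rw [div_eq_div_iff hθ.ne' (zero_lt_one.trans_le hG).ne', one_mul, mul_comm,
    qPochInf_mul_thetaConvCDF hq0 hq1 hζ n]

/-- If `χ` is `q`-geometric and `S` is (independently) theta distributed with parameters
`ζ, q`, then `P(χ + S ≤ n) = 1/(-ζ q^{1/2+n}; q)_∞`. -/
theorem stmt0 {Ω : Type*} [MeasurableSpace Ω] (μ : Measure Ω) [IsProbabilityMeasure μ]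
    (q ζ : ℝ) (hq : q ∈ Set.Ioo (0:ℝ) 1) (hζ : 0 < ζ)
    (χ : Ω → ℕ) (S : Ω → ℤ) (hχ : Measurable χ) (hS : Measurable S)
    (hindep : ProbabilityTheory.IndepFun χ S μ)
    (hχdist : ∀ k : ℕ, μ {ω | χ ω = k} =
      ENNReal.ofReal (q ^ k * qPochInf q q / qPochFin q q k))
    (hSdist : ∀ k : ℤ, μ {ω | S ω = k} =
      ENNReal.ofReal (q ^ (((k : ℝ) ^ 2) / 2) * ζ ^ k / theta3 ζ q))
    (n : ℤ) :
    μ {ω | (χ ω : ℤ) + S ω ≤ n} =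
      ENNReal.ofReal (1 / qPochInf (-ζ * q ^ ((1 : ℝ) / 2 + (n : ℝ))) q) :=
  stmt0_general μ q ζ hq hζ χ S hχ hS hindep hχdist hSdist n
end
end

section
/- Let a ∈ (0,1), r > 1, and define g(z) = log(1 − a/z) − log(1 − a z) and h(z) = g(z) − L log z where L = 2a/(1−a). Then h(1) = h'(1) = h''(1) = 0 and h'''(1) = 2σ³ where σ = a^{1/3}(1+a)^{1/3}/(1−a); in particular h'''(1) > 0. -/
/-!
On the strip `a < re z < a⁻¹`, which contains `1`, the three logarithms are taken on the slit
plane, and `1 - a/z = (z - a)/z`, `1 - a z = -a (z - a⁻¹)` give the partial fractions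
`h'(z) = 1/(z - a) - 1/(z - a⁻¹) - (1 + L)/z`, whose derivatives are explicit. At `z = 1`, where
`1 + L = (1 + a)/(1 - a)`, the `(k+1)`-st derivative is a multiple of
`(1 - (-a)^(k+1)) - (1 + a)(1 - a)^k`: this vanishes for `k = 0, 1` and equals `a(1 + a)` for
`k = 2`, while `σ³ = a(1 + a)/(1 - a)³`.
-/

noncomputable section

/-- the function `h(z) = log(1 − a/z) − log(1 − a z) − L log z` -/
def hfun (a L : ℝ) (z : ℂ) : ℂ :=
  Complex.log (1 - (a : ℂ) / z) - Complex.log (1 - (a : ℂ) * z) - (L : ℂ) * Complex.log z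

open Complex Set
open scoped Nat

lemma hasDerivAt_sub_zpow (m : ℤ) {p z : ℂ} (hz : z ≠ p) :
    HasDerivAt (fun w => (w - p) ^ m) (m * (z - p) ^ (m - 1)) z :=
  (hasDerivAt_zpow m (z - p) (.inl (sub_ne_zero.2 hz))).comp_sub_const z p

lemma one_sub_div_mem_slitPlane {a : ℝ} (ha : 0 < a) {z : ℂ} (hz : a < z.re) :
    1 - (a : ℂ) / z ∈ slitPlane := by
  have hre : 0 < z.re := ha.trans hz
  have hsq : a * z.re < normSq z := (mul_lt_mul_of_pos_right hz hre).trans_le <| by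
    simpa [sq] using re_sq_le_normSq z
  left
  rw [sub_re, one_re, div_eq_mul_inv, re_ofReal_mul, inv_re, sub_pos, mul_div_assoc']
  exact (div_lt_one ((mul_pos ha hre).trans hsq)).2 hsq

lemma one_sub_mul_mem_slitPlane {a : ℝ} (ha : 0 < a) {z : ℂ} (hz : z.re < a⁻¹) :
    1 - (a : ℂ) * z ∈ slitPlane := by
  left
  rw [sub_re, one_re, re_ofReal_mul, sub_pos]
  exact (mul_lt_mul_of_pos_left hz ha).trans_eq (mul_inv_cancel₀ ha.ne')

lemma ne_of_re_mem_Ioo {a : ℝ} (ha : 0 < a) {z : ℂ} (hz : z.re ∈ Ioo a a⁻¹) :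
    z ≠ 0 ∧ z ≠ a ∧ z ≠ (a : ℂ)⁻¹ := by
  refine ⟨?_, ?_, ?_⟩ <;> rintro rfl
  · exact (ha.trans hz.1).ne' zero_re
  · simp at hz
  · simp [← ofReal_inv] at hz

/-- The `(k+1)`-st derivative of `hfun a L` on the strip `a < re z < a⁻¹`. -/
def hfunDeriv (a L : ℝ) (k : ℕ) (z : ℂ) : ℂ :=
  (-1) ^ k * k ! * ((z - a) ^ (-1 - k : ℤ) - (z - (a : ℂ)⁻¹) ^ (-1 - k : ℤ)
    - (1 + L) * z ^ (-1 - k : ℤ))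

lemma hasDerivAt_hfun {a : ℝ} (ha : 0 < a) (L : ℝ) {z : ℂ} (hz : z.re ∈ Ioo a a⁻¹) :
    HasDerivAt (hfun a L) (hfunDeriv a L 0 z) z := by
  obtain ⟨hz0, hza, hza'⟩ := ne_of_re_mem_Ioo ha hz
  have hlog₁ := ((hasDerivAt_inv hz0).const_mul (a : ℂ)).const_sub 1 |>.clog
    (one_sub_div_mem_slitPlane ha hz.1)
  have hlog₂ := ((hasDerivAt_id' z).const_mul (a : ℂ)).const_sub 1 |>.clog
    (one_sub_mul_mem_slitPlane ha hz.2)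
  have hlog₃ := (hasDerivAt_log (.inl (ha.trans hz.1))).const_mul (L : ℂ)
  have e : hfun a L = fun w => log (1 - a * w⁻¹) - log (1 - a * w) - L * log w := by
    funext w; simp only [hfun, div_eq_mul_inv]
  rw [e]
  refine ((hlog₁.sub hlog₂).sub hlog₃).congr_deriv ?_
  have ha0 : (a : ℂ) ≠ 0 := ofReal_ne_zero.2 ha.ne'
  have h₁ : z - a ≠ 0 := sub_ne_zero.2 hza
  have h₂ : z - (a : ℂ)⁻¹ ≠ 0 := sub_ne_zero.2 hza'
  rw [show 1 - (a : ℂ) * z⁻¹ = (z - a) / z by field_simp,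
    show 1 - (a : ℂ) * z = -a * (z - (a : ℂ)⁻¹) by field_simp; ring]
  simp only [hfunDeriv, pow_zero, Nat.factorial_zero, Nat.cast_zero, Nat.cast_one, sub_zero,
    one_mul, zpow_neg_one]
  field_simp
  ring

lemma hasDerivAt_hfunDeriv (a L : ℝ) (k : ℕ) {z : ℂ} (hz0 : z ≠ 0) (hza : z ≠ a)
    (hza' : z ≠ (a : ℂ)⁻¹) : HasDerivAt (hfunDeriv a L k) (hfunDeriv a L (k + 1) z) z := by
  have d := (((hasDerivAt_sub_zpow (-1 - k) hza).sub (hasDerivAt_sub_zpow (-1 - k) hza')).sub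
    ((hasDerivAt_zpow (-1 - k) z (.inl hz0)).const_mul (1 + L : ℂ))).const_mul
    ((-1) ^ k * k ! : ℂ)
  refine d.congr_deriv ?_
  rw [show (-1 - k : ℤ) - 1 = -1 - ↑(k + 1) by push_cast; ring]
  simp only [hfunDeriv, Nat.factorial_succ]
  push_cast
  ring

lemma iterate_deriv_hfun_eqOn {a : ℝ} (ha : 0 < a) (L : ℝ) (k : ℕ) :
    EqOn (deriv^[k + 1] (hfun a L)) (hfunDeriv a L k) (re ⁻¹' Ioo a a⁻¹) := by
  induction k with
  | zero => exact fun z hz => (hasDerivAt_hfun ha L hz).deriv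
  | succ k ih =>
    intro z hz
    obtain ⟨hz0, hza, hza'⟩ := ne_of_re_mem_Ioo ha hz
    rw [Function.iterate_succ_apply', ih.deriv (isOpen_Ioo.preimage continuous_re) hz]
    exact (hasDerivAt_hfunDeriv a L k hz0 hza hza').deriv

lemma hfunDeriv_one {a : ℝ} (ha : a ≠ 0) (ha1 : a ≠ 1) (k : ℕ) :
    hfunDeriv a (2 * a / (1 - a)) k 1 =
      (-1) ^ k * k ! * ((1 - (-a) ^ (k + 1)) - (1 + a) * (1 - a) ^ k) / (1 - a) ^ (k + 1) := by
  have ha' : (a : ℂ) ≠ 0 := ofReal_ne_zero.2 ha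
  have h1a : (1 - a : ℂ) ≠ 0 := sub_ne_zero.2 (by exact_mod_cast ha1.symm)
  have hpole : 1 - (a : ℂ)⁻¹ = (1 - a) / (-a) := by field_simp; ring
  rw [hfunDeriv, show (-1 - k : ℤ) = -↑(k + 1) by push_cast; ring]
  simp only [zpow_neg, zpow_natCast, hpole, div_pow]
  push_cast
  field_simp
  ring

theorem stmt7_general (a : ℝ) (ha : a ∈ Set.Ioo (0:ℝ) 1)
    (L σ : ℝ) (hL : L = 2 * a / (1 - a))
    (hσ : σ = a ^ ((1:ℝ)/3) * (1 + a) ^ ((1:ℝ)/3) / (1 - a)) :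
    hfun a L 1 = 0 ∧ deriv (hfun a L) 1 = 0 ∧ deriv (deriv (hfun a L)) 1 = 0 ∧
      deriv (deriv (deriv (hfun a L))) 1 = 2 * (σ : ℂ) ^ 3 ∧ (0:ℝ) < 2 * σ ^ 3 := by
  obtain ⟨ha0, ha1⟩ := ha
  subst hL
  have hσ3 : σ ^ 3 = a * (1 + a) / (1 - a) ^ 3 := by
    rw [hσ, div_pow, mul_pow, one_div, ← Nat.cast_three,
      Real.rpow_inv_natCast_pow ha0.le three_ne_zero, Real.rpow_inv_natCast_pow (by linarith) three_ne_zero]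
  have h1 : (1 : ℂ).re ∈ Ioo a a⁻¹ := ⟨by simpa using ha1, by simpa using one_lt_inv₀ ha0 |>.2 ha1⟩
  have hD (k : ℕ) := iterate_deriv_hfun_eqOn ha0 (2 * a / (1 - a)) k h1
  refine ⟨by simp [hfun], ?_, ?_, ?_, ?_⟩
  · exact (hD 0).trans (by rw [hfunDeriv_one ha0.ne' ha1.ne]; ring)
  · exact (hD 1).trans (by rw [hfunDeriv_one ha0.ne' ha1.ne]; ring)
  · refine (hD 2).trans ?_
    rw [hfunDeriv_one ha0.ne' ha1.ne, ← ofReal_pow, hσ3]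
    push_cast
    field_simp
    ring
  · rw [hσ3]
    have : 0 < 1 - a := sub_pos.2 ha1
    positivity

/-- With `L = 2a/(1−a)` and `σ = a^{1/3}(1+a)^{1/3}/(1−a)`, the function
`h(z) = g(z) − L log z` has a doubly critical point at `z = 1`:
`h(1) = h'(1) = h''(1) = 0` and `h'''(1) = 2σ³ > 0`. -/
theorem stmt7 (a r : ℝ) (ha : a ∈ Set.Ioo (0:ℝ) 1) (hr : 1 < r)
    (L σ : ℝ) (hL : L = 2 * a / (1 - a))
    (hσ : σ = a ^ ((1:ℝ)/3) * (1 + a) ^ ((1:ℝ)/3) / (1 - a)) :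
    hfun a L 1 = 0 ∧ deriv (hfun a L) 1 = 0 ∧ deriv (deriv (hfun a L)) 1 = 0 ∧
      deriv (deriv (deriv (hfun a L))) 1 = 2 * (σ : ℂ) ^ 3 ∧ (0:ℝ) < 2 * σ ^ 3 :=
  stmt7_general a ha L σ hL hσ
end
end

section
/- Let a ∈ (0,1), r > 1 with ar < 1, and define g(z) = log(1 − a/z) − log(1 − az), h(z) = g(z) − L log z with L = 2a/(1−a). Then for θ ∈ (0, π), the derivative in θ of Re h(r e^{iθ}) equals (a(1−a²) sin θ) / (|1 − (a/r)e^{−iθ}|² |1 − a r e^{iθ}|²) · (r^{−1} − r), which is strictly negative; in particular θ ↦ Re h(re^{iθ}) is strictly decreasing on (0,π), so the circle |z| = r is a steep descent contour for Re h. -/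
/-!
On the circle `z = r e^{iθ}` we have `Re log w = log ‖w‖`, so `Re h` is
`½ log (1 - 2(a/r) cos θ + (a/r)²) - ½ log (1 - 2ar cos θ + (ar)²) - L log r`, and the `L`-term is
constant in `θ`. Differentiating, the `cos θ` terms cancel in the numerator, which collapses to
`a (1 - a²) (r⁻¹ - r) sin θ`; both denominators are `(c - cos θ)² + sin² θ > 0` for `θ ∈ (0, π)`.
-/

noncomputable section

/-- the claimed value of the derivative `d/dθ Re h(r e^{iθ})` -/
def Dval (a r θ : ℝ) : ℝ :=
  a * (1 - a ^ 2) * Real.sin θ /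
      (‖1 - ((a / r : ℝ) : ℂ) * Complex.exp (-((θ : ℂ) * Complex.I))‖ ^ 2 *
        ‖1 - ((a * r : ℝ) : ℂ) * Complex.exp ((θ : ℂ) * Complex.I)‖ ^ 2) *
    (r⁻¹ - r)

open Complex

def poissonDenom (c t : ℝ) : ℝ := 1 - 2 * c * Real.cos t + c ^ 2

lemma norm_one_sub_mul_exp_sq (c t : ℝ) :
    ‖1 - (c : ℂ) * exp (t * I)‖ ^ 2 = poissonDenom c t := by
  rw [Complex.sq_norm, normSq_apply, poissonDenom]
  simp [exp_mul_I, ← ofReal_cos, ← ofReal_sin]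
  nlinarith [Real.sin_sq_add_cos_sq t]

lemma norm_one_sub_mul_exp_neg_sq (c t : ℝ) :
    ‖1 - (c : ℂ) * exp (-(t * I))‖ ^ 2 = poissonDenom c t := by
  have : -((t : ℂ) * I) = ((-t : ℝ) : ℂ) * I := by push_cast; ring
  rw [this, norm_one_sub_mul_exp_sq, poissonDenom, poissonDenom, Real.cos_neg]

lemma poissonDenom_eq_sq_add_sq (c t : ℝ) :
    poissonDenom c t = (c - Real.cos t) ^ 2 + Real.sin t ^ 2 := by
  rw [poissonDenom]
  nlinarith [Real.sin_sq_add_cos_sq t]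

lemma poissonDenom_pos {c t : ℝ} (ht : Real.sin t ≠ 0) : 0 < poissonDenom c t := by
  rw [poissonDenom_eq_sq_add_sq]
  positivity

lemma hasDerivAt_poissonDenom (c t : ℝ) :
    HasDerivAt (poissonDenom c) (2 * c * Real.sin t) t := by
  have := (((Real.hasDerivAt_cos t).const_mul (2 * c)).const_sub 1).add_const (c ^ 2)
  exact this.congr_deriv (by ring)

lemma re_hfun_ofReal_mul_exp (a L t : ℝ) {r : ℝ} (hr : 0 < r) :
    (hfun a L (r * exp (t * I))).re =
      Real.log (poissonDenom (a / r) t) / 2 - Real.log (poissonDenom (a * r) t) / 2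
        - L * Real.log r := by
  have hr' : (r : ℂ) ≠ 0 := ofReal_ne_zero.mpr hr.ne'
  have hdiv : (a : ℂ) / (r * exp (t * I)) = ((a / r : ℝ) : ℂ) * exp (-(t * I)) := by
    rw [exp_neg]; push_cast; field_simp
  have hmul : (a : ℂ) * (r * exp (t * I)) = ((a * r : ℝ) : ℂ) * exp (t * I) := by
    push_cast; ring
  have hnorm : ‖(r : ℂ) * exp (t * I)‖ = r := by
    rw [norm_mul, norm_exp_ofReal_mul_I, norm_real, Real.norm_of_nonneg hr.le, mul_one]
  have re_log (w : ℂ) : (log w).re = Real.log (‖w‖ ^ 2) / 2 := by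
    rw [log_re, Real.log_pow]; push_cast; ring
  rw [hfun, sub_re, sub_re, hdiv, hmul, re_log, re_log, norm_one_sub_mul_exp_neg_sq,
    norm_one_sub_mul_exp_sq, re_ofReal_mul, log_re, hnorm]

lemma div_mul_poissonDenom_sub_mul_mul_poissonDenom (a t : ℝ) {r : ℝ} (hr : r ≠ 0) :
    a / r * poissonDenom (a * r) t - a * r * poissonDenom (a / r) t =
      a * (1 - a ^ 2) * (r⁻¹ - r) := by
  simp only [poissonDenom]
  field_simp
  ring

lemma Dval_eq (a r θ : ℝ) :
    Dval a r θ = a * (1 - a ^ 2) * Real.sin θ /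
      (poissonDenom (a / r) θ * poissonDenom (a * r) θ) * (r⁻¹ - r) := by
  rw [Dval, norm_one_sub_mul_exp_neg_sq, norm_one_sub_mul_exp_sq]

lemma hasDerivAt_re_hfun_ofReal_mul_exp (a L : ℝ) {r θ : ℝ} (hr : 0 < r)
    (hθ : Real.sin θ ≠ 0) :
    HasDerivAt (fun t : ℝ => (hfun a L (r * exp (t * I))).re) (Dval a r θ) θ := by
  have hp₁ : poissonDenom (a / r) θ ≠ 0 := (poissonDenom_pos hθ).ne'
  have hp₂ : poissonDenom (a * r) θ ≠ 0 := (poissonDenom_pos hθ).ne'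
  have hlog :=
    ((((hasDerivAt_poissonDenom (a / r) θ).log hp₁).div_const 2).sub
      (((hasDerivAt_poissonDenom (a * r) θ).log hp₂).div_const 2)).sub_const (L * Real.log r)
  rw [funext fun t => re_hfun_ofReal_mul_exp a L t hr]
  refine hlog.congr_deriv ?_
  set p₁ := poissonDenom (a / r) θ
  set p₂ := poissonDenom (a * r) θ
  calc 2 * (a / r) * Real.sin θ / p₁ / 2 - 2 * (a * r) * Real.sin θ / p₂ / 2
      = Real.sin θ * (a / r * p₂ - a * r * p₁) / (p₁ * p₂) := by field_simp
    _ = Dval a r θ := by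
      rw [div_mul_poissonDenom_sub_mul_mul_poissonDenom a θ hr.ne', Dval_eq]
      ring

lemma Dval_neg {a r θ : ℝ} (ha₀ : 0 < a) (ha₁ : a < 1) (hr : 1 < r) (hθ : 0 < Real.sin θ) :
    Dval a r θ < 0 := by
  rw [Dval_eq]
  have hnum : 0 < a * (1 - a ^ 2) * Real.sin θ := by
    have : 0 < 1 - a ^ 2 := by nlinarith
    positivity
  have hden : 0 < poissonDenom (a / r) θ * poissonDenom (a * r) θ :=
    mul_pos (poissonDenom_pos hθ.ne') (poissonDenom_pos hθ.ne')
  have hr' : r⁻¹ - r < 0 := by linarith [inv_lt_one_of_one_lt₀ hr]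
  exact mul_neg_of_pos_of_neg (div_pos hnum hden) hr'

theorem stmt8_general (a r : ℝ) (ha : a ∈ Set.Ioo (0:ℝ) 1) (hr : 1 < r)
    (L : ℝ) :
    (∀ θ ∈ Set.Ioo (0:ℝ) Real.pi,
      HasDerivAt (fun t : ℝ => (hfun a L ((r : ℂ) * Complex.exp ((t : ℂ) * Complex.I))).re)
        (Dval a r θ) θ ∧ Dval a r θ < 0) ∧
    StrictAntiOn (fun t : ℝ => (hfun a L ((r : ℂ) * Complex.exp ((t : ℂ) * Complex.I))).re)
      (Set.Ioo 0 Real.pi) := by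
  have hsin {θ : ℝ} (hθ : θ ∈ Set.Ioo 0 Real.pi) : 0 < Real.sin θ :=
    Real.sin_pos_of_pos_of_lt_pi hθ.1 hθ.2
  have hderiv {θ : ℝ} (hθ : θ ∈ Set.Ioo 0 Real.pi) :=
    hasDerivAt_re_hfun_ofReal_mul_exp a L (zero_lt_one.trans hr) (hsin hθ).ne'
  have hneg {θ : ℝ} (hθ : θ ∈ Set.Ioo 0 Real.pi) : Dval a r θ < 0 :=
    Dval_neg ha.1 ha.2 hr (hsin hθ)
  refine ⟨fun θ hθ => ⟨hderiv hθ, hneg hθ⟩, ?_⟩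
  refine strictAntiOn_of_deriv_neg (convex_Ioo 0 Real.pi)
    (fun x hx => (hderiv hx).continuousAt.continuousWithinAt) fun x hx => ?_
  rw [interior_Ioo] at hx
  rw [(hderiv hx).deriv]
  exact hneg hx

/-- Steep descent: for `a ∈ (0,1)`, `1 < r`, `a r < 1` and `L = 2a/(1−a)`, the derivative in
`θ ∈ (0,π)` of `Re h(r e^{iθ})` equals
`(a(1−a²) sin θ)/(|1−(a/r)e^{−iθ}|²|1−a r e^{iθ}|²)·(r⁻¹−r) < 0`; in particular
`θ ↦ Re h(re^{iθ})` is strictly decreasing on `(0,π)`. -/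
theorem stmt8 (a r : ℝ) (ha : a ∈ Set.Ioo (0:ℝ) 1) (hr : 1 < r) (har : a * r < 1)
    (L : ℝ) (hL : L = 2 * a / (1 - a)) :
    (∀ θ ∈ Set.Ioo (0:ℝ) Real.pi,
      HasDerivAt (fun t : ℝ => (hfun a L ((r : ℂ) * Complex.exp ((t : ℂ) * Complex.I))).re)
        (Dval a r θ) θ ∧ Dval a r θ < 0) ∧
    StrictAntiOn (fun t : ℝ => (hfun a L ((r : ℂ) * Complex.exp ((t : ℂ) * Complex.I))).re)
      (Set.Ioo 0 Real.pi) :=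
  stmt8_general a r ha hr L
end
end

section
/- For a, b ∈ ℝ with a not a nonpositive integer, there exists a constant C (depending on a and b only) such that for all u ∈ ℝ, |Γ(a + iu)/Γ(b − iu)| ≤ C (1 + |u|)^{a−b}. -/
/-!
Since `Γ(b - iu) = conj Γ(b + iu)`, it suffices to bound `Γ(a + iu) / Γ(b + iu)`.
The recurrence `Γ(s + 1) = s Γ(s)`, together with `|x + iu| ≍ 1 + |u|` for `x ≠ 0`, shifts `a` and
`b` by integers (keeping `a` off the poles), which reduces the claim to `Γ(x + θ + iu) / Γ(x + iu)`
with `x > 0` and `0 ≤ θ ≤ 1`. By Euler's limit `Γ(s) = lim n^s n! / ∏_{j ≤ n} (s + j)` this ratio is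
the limit of `n^θ ∏_{j ≤ n} |x + j + iu| / |x + θ + j + iu|`. Up to an error `1 / t²`, summable along
`t = x + j`, the function `t ↦ log (t² + u²)` is concave, so the logarithm of the product telescopes
to at most `(θ/2) (log (x² + u²) - log ((x + n + 1)² + u²))`; the second term cancels `n^θ`, and the
first gives `(1 + |u|)^θ`.
-/

open Finset Filter Asymptotics Complex
open scoped Nat ComplexConjugate

namespace GammaRatio

theorem log_add_le_log_add_div {r e : ℝ} (hr : 0 < r) (hre : 0 < r + e) :
    Real.log (r + e) ≤ Real.log r + e / r := by
  have h := Real.log_le_sub_one_of_pos (div_pos hre hr)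
  rw [Real.log_div hre.ne' hr.ne'] at h
  have : (r + e) / r - 1 = e / r := by field_simp; ring
  linarith

-- `(s + θ) ^ 2 + u ^ 2` falls short of the convex combination of the values of `t ^ 2 + u ^ 2` at
-- `s` and `s + 1` only by `θ (1 - θ)`, so concavity of `log` applies up to an error `1 / s ^ 2`.
theorem log_sq_add_sq_sub_le {s θ : ℝ} (hs : 0 < s) (hθ₀ : 0 ≤ θ) (hθ₁ : θ ≤ 1) (u : ℝ) :
    Real.log (s ^ 2 + u ^ 2) - Real.log ((s + θ) ^ 2 + u ^ 2) ≤
      θ * (Real.log (s ^ 2 + u ^ 2) - Real.log ((s + 1) ^ 2 + u ^ 2)) + 1 / s ^ 2 := by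
  have hR : 0 < (s + θ) ^ 2 + u ^ 2 := by positivity
  have hconcave := strictConcaveOn_log_Ioi.concaveOn.2
    (Set.mem_Ioi.2 (show 0 < s ^ 2 + u ^ 2 by positivity))
    (Set.mem_Ioi.2 (show 0 < (s + 1) ^ 2 + u ^ 2 by positivity))
    (sub_nonneg.2 hθ₁) hθ₀ (sub_add_cancel 1 θ)
  simp only [smul_eq_mul] at hconcave
  rw [show (1 - θ) * (s ^ 2 + u ^ 2) + θ * ((s + 1) ^ 2 + u ^ 2)
      = ((s + θ) ^ 2 + u ^ 2) + θ * (1 - θ) by ring] at hconcave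
  have hlog := log_add_le_log_add_div hR (show 0 < (s + θ) ^ 2 + u ^ 2 + θ * (1 - θ) by nlinarith)
  have herr : θ * (1 - θ) / ((s + θ) ^ 2 + u ^ 2) ≤ 1 / s ^ 2 :=
    div_le_div₀ zero_le_one (by nlinarith) (by positivity) (by nlinarith)
  linarith

theorem summable_one_div_add_sq (x : ℝ) : Summable fun j : ℕ => 1 / (x + j) ^ 2 := by
  refine ((Real.summable_one_div_nat_add_rpow x 2).2 one_lt_two).congr fun j => ?_
  rw [Real.rpow_two, sq_abs, add_comm]

theorem sum_log_sq_add_sq_sub_le {x θ : ℝ} (hx : 0 < x) (hθ₀ : 0 ≤ θ) (hθ₁ : θ ≤ 1)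
    (u : ℝ) (N : ℕ) :
    ∑ j ∈ range N, (Real.log ((x + j) ^ 2 + u ^ 2) - Real.log ((x + θ + j) ^ 2 + u ^ 2)) ≤
      θ * (Real.log (x ^ 2 + u ^ 2) - Real.log ((x + N) ^ 2 + u ^ 2)) +
        ∑' j : ℕ, 1 / (x + j) ^ 2 := by
  set L : ℕ → ℝ := fun j => Real.log ((x + j) ^ 2 + u ^ 2)
  have hterm : ∀ j ∈ range N, Real.log ((x + j) ^ 2 + u ^ 2) -
      Real.log ((x + θ + j) ^ 2 + u ^ 2) ≤ θ * (L j - L (j + 1)) + 1 / (x + j) ^ 2 := by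
    intro j _
    have h := log_sq_add_sq_sub_le (s := x + j) (by positivity) hθ₀ hθ₁ u
    simp only [L, Nat.cast_succ, ← add_assoc, add_right_comm x θ] at h ⊢
    exact h
  have htelescope : ∑ j ∈ range N, θ * (L j - L (j + 1)) = θ * (L 0 - L N) := by
    rw [← mul_sum, sum_range_sub']
  have herr : ∑ j ∈ range N, 1 / (x + j) ^ 2 ≤ ∑' j : ℕ, 1 / (x + j) ^ 2 :=
    (summable_one_div_add_sq x).sum_le_tsum _ fun j _ => by positivity
  calc _ ≤ ∑ j ∈ range N, (θ * (L j - L (j + 1)) + 1 / (x + j) ^ 2) := sum_le_sum hterm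
    _ ≤ _ := by
      rw [sum_add_distrib, htelescope]
      simp only [L, Nat.cast_zero, add_zero]
      linarith

theorem log_sq_add_sq_le (x u : ℝ) :
    Real.log (x ^ 2 + u ^ 2) ≤ Real.log (1 + x ^ 2) + 2 * Real.log (1 + |u|) := by
  rcases eq_or_ne (x ^ 2 + u ^ 2) 0 with h | h
  · rw [h, Real.log_zero]
    have := Real.log_nonneg (show 1 ≤ 1 + x ^ 2 by nlinarith)
    have := Real.log_nonneg (show 1 ≤ 1 + |u| by linarith [abs_nonneg u])
    linarith
  rw [show 2 * Real.log (1 + |u|) = Real.log ((1 + |u|) ^ 2) by simp [Real.log_pow],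
    ← Real.log_mul (by positivity) (by positivity)]
  refine Real.log_le_log (by positivity) ?_
  nlinarith [sq_abs u, abs_nonneg u, sq_nonneg x, mul_nonneg (sq_nonneg x) (abs_nonneg u)]

theorem norm_GammaSeq_ofReal_add_mul_I {x : ℝ} (hx : 0 < x) (u : ℝ) {n : ℕ} (hn : n ≠ 0) :
    ‖GammaSeq (x + u * I) n‖ = Real.exp (x * Real.log n + Real.log n ! -
      (∑ j ∈ range (n + 1), Real.log ((x + j) ^ 2 + u ^ 2)) / 2) := by
  have hfactor : ∀ j : ℕ, ‖(x : ℂ) + u * I + j‖ =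
      Real.exp (Real.log ((x + j) ^ 2 + u ^ 2) / 2) := fun j => by
    rw [show (x : ℂ) + u * I + j = ((x + j : ℝ) : ℂ) + u * I by push_cast; ring,
      norm_add_mul_I, Real.sqrt_eq_rpow, Real.rpow_def_of_pos (by positivity), mul_one_div]
  rw [GammaSeq, norm_div, norm_mul, norm_natCast_cpow_of_pos (Nat.pos_of_ne_zero hn),
    norm_prod, Complex.norm_natCast, Finset.prod_congr rfl fun j _ => hfactor j,
    ← Real.exp_sum, ← sum_div, Real.exp_sub, Real.exp_add, Real.exp_log (by positivity),
    Real.rpow_def_of_pos (by positivity), mul_comm (Real.log n)]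
  simp

def GammaRatioBound (a b : ℝ) : Prop :=
  (fun u : ℝ => Gamma (a + u * I) / Gamma (b + u * I)) =O[⊤] fun u => (1 + |u|) ^ (a - b)

theorem gammaRatioBound_add {x θ : ℝ} (hx : 0 < x) (hθ₀ : 0 ≤ θ) (hθ₁ : θ ≤ 1) :
    GammaRatioBound (x + θ) x := by
  set K := ∑' j : ℕ, 1 / (x + j) ^ 2
  refine isBigO_top.2 ⟨Real.exp ((θ * Real.log (1 + x ^ 2) + K) / 2), fun u => ?_⟩
  have hu : 0 < 1 + |u| := by positivity
  rw [Real.norm_of_nonneg (by positivity), Real.rpow_def_of_pos hu, ← Real.exp_add,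
    show x + θ - x = θ by ring]
  have hΓ : Gamma (x + u * I) ≠ 0 := Gamma_ne_zero_of_re_pos (by simpa using hx)
  refine le_of_tendsto (((GammaSeq_tendsto_Gamma _).div (GammaSeq_tendsto_Gamma _) hΓ).norm)
    ((eventually_ne_atTop 0).mono fun n hn => ?_)
  have hn1 : (1 : ℝ) ≤ n := by exact_mod_cast Nat.one_le_iff_ne_zero.2 hn
  rw [Pi.div_apply, norm_div, norm_GammaSeq_ofReal_add_mul_I (by positivity) u hn,
    norm_GammaSeq_ofReal_add_mul_I hx u hn, ← Real.exp_sub, Real.exp_le_exp]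
  have hsum := sum_log_sq_add_sq_sub_le hx hθ₀ hθ₁ u (n + 1)
  rw [sum_sub_distrib] at hsum
  have hfar : 2 * Real.log n ≤ Real.log ((x + (n + 1 : ℕ)) ^ 2 + u ^ 2) := by
    rw [show 2 * Real.log n = Real.log ((n : ℝ) ^ 2) by simp [Real.log_pow]]
    refine Real.log_le_log (by positivity) ?_
    push_cast
    nlinarith
  have hnear := log_sq_add_sq_le x u
  have := mul_le_mul_of_nonneg_left (add_le_add hnear hfar) hθ₀
  linarith

theorem isBigO_ofReal_add_mul_I (x : ℝ) :
    (fun u : ℝ => (x : ℂ) + u * I) =O[⊤] fun u => 1 + |u| := by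
  refine isBigO_top.2 ⟨1 + |x|, fun u => ?_⟩
  rw [Real.norm_of_nonneg (by positivity)]
  calc ‖(x : ℂ) + u * I‖ ≤ |x| + |u| := by
        simpa using norm_add_le (x : ℂ) (u * I)
    _ ≤ (1 + |x|) * (1 + |u|) := by nlinarith [abs_nonneg x, abs_nonneg u]

theorem isBigO_inv_ofReal_add_mul_I {x : ℝ} (hx : x ≠ 0) :
    (fun u : ℝ => ((x : ℂ) + u * I)⁻¹) =O[⊤] fun u => (1 + |u|)⁻¹ := by
  set c := min |x| 1
  have hc : 0 < c := lt_min (abs_pos.2 hx) one_pos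
  refine isBigO_top.2 ⟨2 / c, fun u => ?_⟩
  have hz : |x| + |u| ≤ 2 * ‖(x : ℂ) + u * I‖ := by
    have hre : |x| ≤ ‖(x : ℂ) + u * I‖ := by simpa using abs_re_le_norm ((x : ℂ) + u * I)
    have him : |u| ≤ ‖(x : ℂ) + u * I‖ := by simpa using abs_im_le_norm ((x : ℂ) + u * I)
    linarith
  have hcu : c * (1 + |u|) ≤ |x| + |u| := by
    nlinarith [min_le_left |x| 1, min_le_right |x| 1, abs_nonneg u]
  rw [norm_inv, Real.norm_of_nonneg (by positivity), ← div_eq_mul_inv,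
    inv_le_iff_one_le_mul₀ (by linarith [abs_pos.2 hx, abs_nonneg u])]
  rw [div_div, div_mul_eq_mul_div, one_le_div (by positivity)]
  nlinarith

theorem GammaRatioBound.of_add_one_left {a b : ℝ} (ha : a ≠ 0) (h : GammaRatioBound (a + 1) b) :
    GammaRatioBound a b := by
  have hz : ∀ u : ℝ, (a : ℂ) + u * I ≠ 0 := fun u hu => ha (by simpa using congrArg re hu)
  refine ((isBigO_inv_ofReal_add_mul_I ha).mul h).congr (fun u => ?_) (fun u => ?_)
  · rw [show ((a + 1 : ℝ) : ℂ) + u * I = (a + u * I) + 1 by push_cast; ring,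
      Gamma_add_one _ (hz u), mul_div_assoc, inv_mul_cancel_left₀ (hz u)]
  · rw [show a + 1 - b = a - b + 1 by ring, Real.rpow_add_one (by positivity)]
    field_simp

theorem GammaRatioBound.of_add_one_right {a b : ℝ} (h : GammaRatioBound a (b + 1)) :
    GammaRatioBound a b := by
  refine ((isBigO_ofReal_add_mul_I b).mul h).congr (fun u => ?_) (fun u => ?_)
  -- `1 / Γ` is entire, so this form of the recurrence holds at the poles of `Γ` as well.
  · rw [div_eq_mul_inv _ (Gamma (b + u * I)),
      one_div_Gamma_eq_self_mul_one_div_Gamma_add_one (b + u * I),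
      show (b : ℂ) + u * I + 1 = ((b + 1 : ℝ) : ℂ) + u * I by push_cast; ring]
    ring
  · rw [show a - b = a - (b + 1) + 1 by ring, Real.rpow_add_one (by positivity), mul_comm]

theorem GammaRatioBound.of_add_nat_left {a b : ℝ} {m : ℕ} (ha : ∀ i < m, a + i ≠ 0)
    (h : GammaRatioBound (a + m) b) : GammaRatioBound a b := by
  induction m with
  | zero => simpa using h
  | succ m ih =>
    refine ih (fun i hi => ha i (by omega)) (of_add_one_left (ha m (by omega)) ?_)
    simpa [add_assoc] using h

theorem GammaRatioBound.of_add_nat_right {a b : ℝ} {k : ℕ} (h : GammaRatioBound a (b + k)) :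
    GammaRatioBound a b := by
  induction k with
  | zero => simpa using h
  | succ k ih => exact ih (of_add_one_right (by simpa [add_assoc] using h))

theorem exists_nat_add_le_add_nat_le (a b : ℝ) :
    ∃ m k : ℕ, 0 < b + k ∧ b + k ≤ a + m ∧ a + m ≤ b + k + 1 := by
  obtain ⟨k, hk⟩ := exists_nat_gt (|a| + |b|)
  have hak : a < b + k := by linarith [le_abs_self a, neg_abs_le b]
  refine ⟨⌈b + k - a⌉₊, k, by linarith [abs_nonneg a, neg_abs_le b], ?_, ?_⟩
  · linarith [Nat.le_ceil (b + k - a)]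
  · linarith [Nat.ceil_lt_add_one (show 0 ≤ b + k - a by linarith)]

theorem gammaRatioBound {a b : ℝ} (ha : ∀ m : ℤ, m ≤ 0 → a ≠ m) : GammaRatioBound a b := by
  obtain ⟨m, k, hpos, hle, hle'⟩ := exists_nat_add_le_add_nat_le a b
  have h := gammaRatioBound_add hpos (sub_nonneg.2 hle) (by linarith : a + m - (b + k) ≤ 1)
  rw [add_sub_cancel] at h
  refine GammaRatioBound.of_add_nat_left (fun i _ hi => ha (-i) (by omega) ?_) h.of_add_nat_right
  push_cast
  linarith

theorem norm_Gamma_conj (s : ℂ) : ‖Gamma (conj s)‖ = ‖Gamma s‖ := by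
  rw [Gamma_conj, norm_conj]

end GammaRatio

open GammaRatio in
theorem stmt11_general (a b : ℝ) (ha : ∀ m : ℤ, m ≤ 0 → a ≠ (m : ℝ)) :
    ∃ C : ℝ, 0 < C ∧ ∀ u : ℝ,
      ‖Complex.Gamma ((a : ℂ) + (u : ℂ) * Complex.I) /
          Complex.Gamma ((b : ℂ) - (u : ℂ) * Complex.I)‖ ≤
        C * (1 + |u|) ^ (a - b) := by
  obtain ⟨C, hC, hbound⟩ := (gammaRatioBound (b := b) ha).exists_pos
  refine ⟨C, hC, fun u => ?_⟩
  have hconj : (b : ℂ) - u * I = conj ((b : ℂ) + u * I) := by simp [Complex.ext_iff]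
  have h := isBigOWith_top.1 hbound u
  rwa [norm_div, hconj, norm_Gamma_conj, ← norm_div,
    ← Real.norm_of_nonneg (Real.rpow_nonneg (by positivity) (a - b))]

/-- Polynomial bound on ratios of Gamma functions along vertical lines: for `a, b ∈ ℝ` not
nonpositive integers, there is a constant `C > 0` such that
`|Γ(a+iu)/Γ(b−iu)| ≤ C (1+|u|)^{a−b}` for all real `u`. -/
theorem stmt11 (a b : ℝ) (ha : ∀ m : ℤ, m ≤ 0 → a ≠ (m : ℝ))
    (hb : ∀ m : ℤ, m ≤ 0 → b ≠ (m : ℝ)) :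
    ∃ C : ℝ, 0 < C ∧ ∀ u : ℝ,
      ‖Complex.Gamma ((a : ℂ) + (u : ℂ) * Complex.I) /
          Complex.Gamma ((b : ℂ) - (u : ℂ) * Complex.I)‖ ≤
        C * (1 + |u|) ^ (a - b) :=
  stmt11_general a b ha
end

section
/- Let ε > 0, q = e^{−ε}, and a ∈ [0, π/ε]. Then |Γ_q(1 + ia) / Γ_{q²}(1 + ia)| ≤ 1. -/
/-!
Splitting `(z²;q²)_∞ = (z;q)_∞ (−z;q)_∞` at `z = q` and `z = q^X` turns the ratio into
`((1−q)/(1−q²))^{1−X} · (−q^X;q)_∞ / (−q;q)_∞`. On the line `Re X = 1` the power has modulus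
one and `|q^X| = q`, so the triangle inequality applied factor by factor gives
`|(−q^X;q)_∞| ≤ (−q;q)_∞`.
-/

noncomputable section

/-- infinite q-Pochhammer symbol `(z;q)_∞ = ∏_{i≥0} (1 - z qⁱ)` (complex argument) -/
def qPochInfC (z : ℂ) (q : ℝ) : ℂ := ∏' i : ℕ, (1 - z * (q : ℂ) ^ i)

/-- the q-Gamma function `Γ_q(X) = (1−q)^{1−X} (q;q)_∞ / (q^X;q)_∞` -/
def qGammaC (q : ℝ) (X : ℂ) : ℂ :=
  ((1 - q : ℝ) : ℂ) ^ ((1 : ℂ) - X) * qPochInfC (q : ℂ) q / qPochInfC ((q : ℂ) ^ X) q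

open Complex

theorem Multipliable.tprod_le_tprod_of_nonneg {ι : Type*} {f g : ι → ℝ} (hf : Multipliable f)
    (hg : Multipliable g) (h₀ : ∀ i, 0 ≤ f i) (h : ∀ i, f i ≤ g i) :
    ∏' i, f i ≤ ∏' i, g i :=
  le_of_tendsto_of_tendsto' hf.hasProd hg.hasProd fun _ ↦
    Finset.prod_le_prod (fun i _ ↦ h₀ i) fun i _ ↦ h i

section QPochhammer

variable {q : ℝ}

theorem summable_norm_neg_mul_pow (z : ℂ) (hq : |q| < 1) :
    Summable fun i : ℕ ↦ ‖-(z * (q : ℂ) ^ i)‖ := by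
  simp only [norm_neg, norm_mul, norm_pow, norm_real, Real.norm_eq_abs]
  exact (summable_geometric_of_lt_one (abs_nonneg q) hq).mul_left _

theorem multipliable_qPochInfC (z : ℂ) (hq : |q| < 1) :
    Multipliable fun i : ℕ ↦ 1 - z * (q : ℂ) ^ i := by
  simpa only [sub_eq_add_neg] using multipliable_one_add_of_summable (summable_norm_neg_mul_pow z hq)

theorem qPochInfC_ne_zero {z : ℂ} (hz : ‖z‖ < 1) (hq : |q| < 1) : qPochInfC z q ≠ 0 := by
  have hfactor (i : ℕ) : 1 + -(z * (q : ℂ) ^ i) ≠ 0 := by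
    rw [← sub_eq_add_neg, sub_ne_zero]
    intro h
    have hlt : ‖z * (q : ℂ) ^ i‖ < 1 := by
      rw [norm_mul, norm_pow, norm_real, Real.norm_eq_abs]
      exact mul_lt_one_of_nonneg_of_lt_one_left (norm_nonneg z) hz
        (pow_le_one₀ (abs_nonneg q) hq.le)
    rw [← h, norm_one] at hlt
    exact lt_irrefl _ hlt
  simpa only [qPochInfC, sub_eq_add_neg] using
    tprod_one_add_ne_zero_of_summable hfactor (summable_norm_neg_mul_pow z hq)

theorem qPochInfC_sq (z : ℂ) (hq : |q| < 1) :
    qPochInfC (z ^ 2) (q ^ 2) = qPochInfC z q * qPochInfC (-z) q := by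
  rw [qPochInfC, qPochInfC, qPochInfC,
    ← (multipliable_qPochInfC z hq).tprod_mul (multipliable_qPochInfC (-z) hq)]
  congr 1 with i
  push_cast
  ring

theorem norm_qPochInfC_neg_le (w : ℂ) (hq₀ : 0 ≤ q) (hq₁ : q < 1) :
    ‖qPochInfC (-w) q‖ ≤ ‖qPochInfC (-‖w‖) q‖ := by
  have hq : |q| < 1 := by rwa [abs_of_nonneg hq₀]
  rw [qPochInfC, qPochInfC, (multipliable_qPochInfC _ hq).norm_tprod,
    (multipliable_qPochInfC _ hq).norm_tprod]
  refine (multipliable_qPochInfC _ hq).norm.tprod_le_tprod_of_nonneg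
    (multipliable_qPochInfC _ hq).norm (fun _ ↦ norm_nonneg _) fun i ↦ ?_
  have hreal : (1 : ℂ) - -(‖w‖ : ℂ) * (q : ℂ) ^ i = ((1 + ‖w‖ * q ^ i : ℝ) : ℂ) := by
    push_cast
    ring
  calc ‖1 - -w * (q : ℂ) ^ i‖ ≤ ‖(1 : ℂ)‖ + ‖w * (q : ℂ) ^ i‖ := by
        rw [sub_eq_add_neg, neg_mul, neg_neg]
        exact norm_add_le _ _
    _ = 1 + ‖w‖ * q ^ i := by
        rw [norm_one, norm_mul, norm_pow, norm_real, Real.norm_of_nonneg hq₀]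
    _ = ‖1 - -(‖w‖ : ℂ) * (q : ℂ) ^ i‖ := by
        rw [hreal, norm_real, Real.norm_of_nonneg (by positivity)]

end QPochhammer

theorem qGammaC_div_qGammaC_sq {q : ℝ} (hq₀ : 0 < q) (hq₁ : q < 1) {X : ℂ} (hX : 0 < X.re) :
    qGammaC q X / qGammaC (q ^ 2) X =
      ((1 - q : ℝ) : ℂ) ^ (1 - X) / ((1 - q ^ 2 : ℝ) : ℂ) ^ (1 - X) *
        (qPochInfC (-(q : ℂ) ^ X) q / qPochInfC (-q) q) := by
  have hq : |q| < 1 := by rwa [abs_of_pos hq₀]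
  have hqX : ‖(q : ℂ) ^ X‖ < 1 := by
    rw [norm_cpow_eq_rpow_re_of_pos hq₀]
    exact Real.rpow_lt_one hq₀.le hq₁ hX
  have hqC : ‖(q : ℂ)‖ < 1 := by rwa [norm_real, Real.norm_eq_abs]
  have hsqX : ((q ^ 2 : ℝ) : ℂ) ^ X = ((q : ℂ) ^ X) ^ 2 := by
    rw [sq, sq, ofReal_mul, mul_cpow_ofReal_nonneg hq₀.le hq₀.le]
  have hsq : ((q ^ 2 : ℝ) : ℂ) = (q : ℂ) ^ 2 := by push_cast; rfl
  have hP := qPochInfC_ne_zero hqC hq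
  have hD := qPochInfC_ne_zero hqX hq
  rw [qGammaC, qGammaC, hsqX, hsq, qPochInfC_sq _ hq, qPochInfC_sq _ hq]
  field_simp

theorem stmt14_general (ε : ℝ) (hε : 0 < ε) (q : ℝ) (hq : q = Real.exp (-ε)) (a : ℝ) :
    ‖qGammaC q (1 + (a : ℂ) * Complex.I) /
        qGammaC (q ^ 2) (1 + (a : ℂ) * Complex.I)‖ ≤ 1 := by
  have hq₀ : 0 < q := hq ▸ Real.exp_pos _
  have hq₁ : q < 1 := hq ▸ Real.exp_lt_one_iff.mpr (neg_neg_of_pos hε)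
  set X : ℂ := 1 + (a : ℂ) * Complex.I
  have hXre : X.re = 1 := by simp [X]
  have hnorm_one (x : ℝ) (hx : 0 < x) : ‖(x : ℂ) ^ (1 - X)‖ = 1 := by
    rw [norm_cpow_eq_rpow_re_of_pos hx, sub_re, one_re, hXre, sub_self, Real.rpow_zero]
  have hqX : ‖(q : ℂ) ^ X‖ = q := by
    rw [norm_cpow_eq_rpow_re_of_pos hq₀, hXre, Real.rpow_one]
  have hq_abs : |q| < 1 := by rwa [abs_of_pos hq₀]
  have hpos : 0 < ‖qPochInfC (-q) q‖ :=
    norm_pos_iff.mpr (qPochInfC_ne_zero (by rwa [norm_neg, norm_real, Real.norm_eq_abs]) hq_abs)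
  rw [qGammaC_div_qGammaC_sq hq₀ hq₁ (by rw [hXre]; exact one_pos), norm_mul, norm_div,
    norm_div, hnorm_one _ (by linarith), hnorm_one _ (by nlinarith), div_one, one_mul,
    div_le_one hpos]
  simpa only [hqX] using norm_qPochInfC_neg_le ((q : ℂ) ^ X) hq₀.le hq₁

/-- For `q = e^{−ε}` and `a ∈ [0, π/ε]`, `|Γ_q(1+ia)/Γ_{q²}(1+ia)| ≤ 1`. -/
theorem stmt14 (ε : ℝ) (hε : 0 < ε) (q : ℝ) (hq : q = Real.exp (-ε)) (a : ℝ)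
    (ha : a ∈ Set.Icc 0 (Real.pi / ε)) :
    ‖qGammaC q (1 + (a : ℂ) * Complex.I) /
        qGammaC (q ^ 2) (1 + (a : ℂ) * Complex.I)‖ ≤ 1 :=
  stmt14_general ε hε q hq a
end
end

section
/- Let ε > 0 and η ∈ ℝ. Then Σ_{k ∈ ℤ} e^{−εk²/2 + ηk} = (e^{η²/(2ε)}/√ε) · Σ_{x ∈ √ε ℤ − η/√ε} e^{−x²/2} √ε, and consequently as ε ↓ 0 (with η = η(ε) possibly depending on ε but with η/√ε ∈ ℝ), ϑ₃(e^η; e^{−ε}) = √(2π/ε) · e^{η²/(2ε)} · (1 + O(√ε)), where ϑ₃(ζ;q) = Σ_{k∈ℤ} q^{k²/2} ζ^k. -/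
noncomputable section

/-!
The exact identity is the completed square, term by term. For the asymptotics we use the
modular transformation of the Jacobi theta function rather than a Riemann-sum comparison:
with `τ = iε/(2π)` and `z = -iη/(2π)` the series is `θ(z, τ)`, and
`θ(z, τ) = (-iτ)^(-1/2) e^(-πiz²/τ) θ(z/τ, -1/τ)` rewrites it as
`√(2π/ε) e^(η²/(2ε)) θ(-η/ε, 2πi/ε)`. Because `-η/ε` is real, the `n`-th term of the last series
has modulus `e^(-2π²n²/ε)`, so that series is `1 + O(e^(-2π²/ε))`, uniformly in `η`, and
`e^(-2π²/ε)` is much smaller than `√ε`.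
-/

open Real Complex

lemma theta3_exp_exp_neg (ε η : ℝ) :
    theta3 (rexp η) (rexp (-ε)) = ∑' k : ℤ, rexp (-ε * (k : ℝ) ^ 2 / 2 + η * k) := by
  refine tsum_congr fun k => ?_
  rw [← Real.rpow_intCast, ← Real.exp_mul, ← Real.exp_mul, ← Real.exp_add]
  ring_nf

lemma neg_mul_sq_div_two_add_mul_eq {ε : ℝ} (hε : 0 < ε) (η k : ℝ) :
    -ε * k ^ 2 / 2 + η * k = η ^ 2 / (2 * ε) + -(√ε * k - η / √ε) ^ 2 / 2 := by
  have hs : √ε ≠ 0 := (Real.sqrt_pos.2 hε).ne'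
  field_simp
  rw [Real.sq_sqrt hε.le]
  ring

lemma tsum_exp_neg_mul_sq_add_mul_eq {ε : ℝ} (hε : 0 < ε) (η : ℝ) :
    ∑' k : ℤ, rexp (-ε * (k : ℝ) ^ 2 / 2 + η * k) =
      rexp (η ^ 2 / (2 * ε)) / √ε * ∑' k : ℤ, rexp (-(√ε * k - η / √ε) ^ 2 / 2) * √ε := by
  rw [← tsum_mul_left]
  refine tsum_congr fun k => ?_
  rw [neg_mul_sq_div_two_add_mul_eq hε, Real.exp_add]
  field_simp

lemma summable_exp_neg_pi_mul_int_sq : Summable fun n : ℤ => rexp (-π * n ^ 2) := by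
  simpa [norm_jacobiTheta₂_term] using ((summable_jacobiTheta₂_term_iff 0 I).2 (by simp)).norm

lemma norm_jacobiTheta₂_ofReal_sub_one_le (x : ℝ) {τ : ℂ} (hτ : 1 ≤ τ.im) :
    ‖jacobiTheta₂ x τ - 1‖ ≤ rexp (-π * (τ.im - 1)) * ∑' n : ℤ, rexp (-π * n ^ 2) := by
  have hsum := hasSum_ite_sub_hasSum (hasSum_jacobiTheta₂_term x (by linarith)) 0
  have hterm : ∀ n : ℤ, ‖if n = 0 then 0 else jacobiTheta₂_term n x τ‖ ≤
      rexp (-π * (τ.im - 1)) * rexp (-π * n ^ 2) := by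
    intro n
    split_ifs with hn
    · rw [norm_zero]; positivity
    · have hn2 : (1 : ℝ) ≤ n ^ 2 := by
        rw [one_le_sq_iff_one_le_abs, ← Int.cast_abs]
        exact_mod_cast Int.one_le_abs hn
      rw [norm_jacobiTheta₂_term, ← Real.exp_add, Real.exp_le_exp, ofReal_im]
      nlinarith [mul_nonneg Real.pi_pos.le (mul_nonneg (sub_nonneg.2 hn2) (sub_nonneg.2 hτ))]
  have hterm_zero : jacobiTheta₂_term 0 x τ = 1 := by simp [jacobiTheta₂_term]
  rw [hterm_zero] at hsum
  rw [← hsum.tsum_eq, ← tsum_mul_left]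
  exact tsum_of_norm_bounded (summable_exp_neg_pi_mul_int_sq.mul_left _).hasSum hterm

lemma tsum_exp_neg_mul_sq_add_mul_eq_jacobiTheta₂ {ε : ℝ} (hε : 0 < ε) (η : ℝ) :
    ((∑' k : ℤ, rexp (-ε * (k : ℝ) ^ 2 / 2 + η * k) : ℝ) : ℂ) =
      ((√(2 * π / ε) * rexp (η ^ 2 / (2 * ε)) : ℝ) : ℂ) *
        jacobiTheta₂ (-η / ε : ℝ) (2 * π * I / ε) := by
  have hε' : (ε : ℂ) ≠ 0 := ofReal_ne_zero.2 hε.ne'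
  have hsum : ((∑' k : ℤ, rexp (-ε * (k : ℝ) ^ 2 / 2 + η * k) : ℝ) : ℂ) =
      jacobiTheta₂ (-I * η / (2 * π)) (I * ε / (2 * π)) := by
    rw [ofReal_tsum]
    refine tsum_congr fun k => ?_
    rw [ofReal_exp, jacobiTheta₂_term]
    congr 1
    push_cast
    field_simp
    linear_combination (2 * (η : ℂ) * k - ε * k ^ 2) * I_sq
  have hroot : 1 / (-I * (I * ε / (2 * π))) ^ (1 / 2 : ℂ) = ((√(2 * π / ε) : ℝ) : ℂ) := by
    have hreal : -I * (I * ε / (2 * π)) = ((ε / (2 * π) : ℝ) : ℂ) := by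
      push_cast
      linear_combination (-(ε : ℂ) / (2 * π)) * I_sq
    have hsqrt : ((√(ε / (2 * π)) : ℝ) : ℂ) = ((ε / (2 * π) : ℝ) : ℂ) ^ (1 / 2 : ℂ) := by
      rw [Real.sqrt_eq_rpow, ofReal_cpow (by positivity)]
      norm_num
    rw [hreal, ← hsqrt, ← ofReal_one, ← ofReal_div, one_div, ← Real.sqrt_inv, inv_div]
  have hfactor : cexp (-π * I * (-I * η / (2 * π)) ^ 2 / (I * ε / (2 * π))) =
      ((rexp (η ^ 2 / (2 * ε)) : ℝ) : ℂ) := by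
    rw [ofReal_exp]
    congr 1
    push_cast
    field_simp
    linear_combination -(η : ℂ) ^ 2 * I_sq
  have hz : -I * η / (2 * π) / (I * ε / (2 * π)) = ((-η / ε : ℝ) : ℂ) := by
    push_cast
    field_simp
  have hτ : -1 / (I * ε / (2 * π)) = 2 * π * I / ε := by
    field_simp
    linear_combination -I_sq
  rw [hsum, jacobiTheta₂_functional_equation, hroot, hfactor, hz, hτ, ofReal_mul]

lemma exp_neg_inv_le_self {ε : ℝ} (hε : 0 < ε) : rexp (-ε⁻¹) ≤ ε := by
  have h := mul_exp_neg_le_exp_neg_one ε⁻¹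
  rw [inv_mul_le_iff₀ hε] at h
  exact h.trans (mul_le_of_le_one_right hε.le (Real.exp_le_one_iff.2 (by norm_num)))

lemma abs_theta3_div_sub_one_le {ε : ℝ} (hε : 0 < ε) (hε2π : ε ≤ 2 * π) (η : ℝ) :
    |theta3 (rexp η) (rexp (-ε)) / (√(2 * π / ε) * rexp (η ^ 2 / (2 * ε))) - 1| ≤
      rexp (-π * (2 * π / ε - 1)) * ∑' n : ℤ, rexp (-π * n ^ 2) := by
  have hθ := tsum_exp_neg_mul_sq_add_mul_eq_jacobiTheta₂ hε η
  rw [← theta3_exp_exp_neg] at hθ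
  set D := √(2 * π / ε) * rexp (η ^ 2 / (2 * ε))
  have hD : (D : ℂ) ≠ 0 := ofReal_ne_zero.2 (by positivity)
  have him : 1 ≤ (2 * π * I / ε).im := by
    simpa [one_le_div hε] using hε2π
  calc |theta3 (rexp η) (rexp (-ε)) / D - 1|
      = ‖jacobiTheta₂ (-η / ε : ℝ) (2 * π * I / ε) - 1‖ := by
        rw [← Real.norm_eq_abs, ← Complex.norm_real, ofReal_sub, ofReal_div, hθ,
          mul_div_cancel_left₀ _ hD, ofReal_one]
    _ ≤ _ := norm_jacobiTheta₂_ofReal_sub_one_le _ him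
    _ = _ := by simp

/-- Gaussian summation asymptotics for the theta function: the exact completed-square
identity `Σ_{k∈ℤ} e^{−εk²/2+ηk} = (e^{η²/(2ε)}/√ε) Σ_{k∈ℤ} e^{−(√ε k − η/√ε)²/2} √ε`, and
the consequence `ϑ₃(e^η; e^{−ε}) = √(2π/ε) e^{η²/(2ε)} (1 + O(√ε))` as `ε ↓ 0`,
uniformly in `η`. -/
theorem stmt19 :
    (∀ ε : ℝ, 0 < ε → ∀ η : ℝ,
      (∑' k : ℤ, Real.exp (-ε * (k : ℝ) ^ 2 / 2 + η * k)) =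
        Real.exp (η ^ 2 / (2 * ε)) / Real.sqrt ε *
          ∑' k : ℤ, Real.exp (-(Real.sqrt ε * k - η / Real.sqrt ε) ^ 2 / 2) * Real.sqrt ε) ∧
    (∃ C : ℝ, 0 < C ∧ ∀ ε ∈ Set.Ioc (0:ℝ) 1, ∀ η : ℝ,
      |theta3 (Real.exp η) (Real.exp (-ε)) /
          (Real.sqrt (2 * Real.pi / ε) * Real.exp (η ^ 2 / (2 * ε))) - 1| ≤
        C * Real.sqrt ε) := by
  refine ⟨fun ε hε η => tsum_exp_neg_mul_sq_add_mul_eq hε η,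
    ∑' n : ℤ, rexp (-π * n ^ 2),
    summable_exp_neg_pi_mul_int_sq.tsum_pos (fun _ => (Real.exp_pos _).le) 0 (Real.exp_pos _),
    fun ε ⟨hε, hε1⟩ η => ?_⟩
  have hdecay : rexp (-π * (2 * π / ε - 1)) ≤ √ε := calc
    rexp (-π * (2 * π / ε - 1)) ≤ rexp (-ε⁻¹) := by
      have hgap : π * (2 * π / ε - 1) - ε⁻¹ = (π * (2 * π - ε) - 1) / ε := by field_simp
      have hgap_nonneg : 0 ≤ (π * (2 * π - ε) - 1) / ε := div_nonneg (by nlinarith [Real.pi_gt_three]) hε.le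
      rw [Real.exp_le_exp]
      linarith
    _ ≤ ε := exp_neg_inv_le_self hε
    _ ≤ √ε := Real.le_sqrt_self_iff.2 hε1
  refine (abs_theta3_div_sub_one_le hε (by linarith [Real.pi_gt_three]) η).trans ?_
  rw [mul_comm]
  exact mul_le_mul_of_nonneg_left hdecay (tsum_nonneg fun _ => (Real.exp_pos _).le)
end
end
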